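/- Let s > d, α ≥ 0, and let Λ ⊆ ℝ^d be relatively separated. Suppose {g_k}_{k∈Λ} and {f_k}_{k∈Λ} satisfy |g_k(z)|, |f_k(z)| ≤ C(1+|z-k|)^{-(s+α)}, and let x₀ ∈ ℝ^d and K_{x₀} := ∑_{k∈Λ} \overline{g_k}(x₀) f_k (convergent pointwise). Then |K_{x₀}(z)| ≤ C' · rel(Λ) · (1+|z-x₀|)^{-(s+α)} for all z, where C' depends only on C, s, α, d. -/

import Mathlib

/-!
Where the weights of `g_k` at `x₀` and of `f_k` at `z` are multiplied, the larger of `|x₀ - k|`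
and `|z - k|` is at least `|z - x₀| / 2`, so each term is at most
`2^t C² (1 + |z - x₀|)^(-t) ((1 + |x₀ - k|)^(-t) + (1 + |z - k|)^(-t))` with `t = s + α`.
It remains to bound `∑_{k ∈ Λ} (1 + |x - k|)^(-t)` by a multiple of `rel(Λ)`, uniformly in `x`.
Rounding points down to the lattice `ℤ^d` changes distances by a bounded amount, so by Peetre's
inequality this sum is at most a constant times `rel(Λ) ∑_{n ∈ ℤ^d} (1 + |⌊x⌋ - n|)^(-t)`, a lattice
sum that converges for `t > d` and does not depend on `⌊x⌋`.
-/

open ComplexConjugate Finset Module Submodule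

section Weights

variable {t : ℝ}

lemma Real.rpow_neg_le_mul_rpow_neg {x y c : ℝ} (hx : 0 < x) (hc : 0 < c) (h : x ≤ c * y)
    (ht : 0 ≤ t) : y ^ (-t) ≤ c ^ t * x ^ (-t) := by
  have hxy : x / c ≤ y := (div_le_iff₀' hc).mpr h
  calc y ^ (-t) ≤ (x / c) ^ (-t) :=
        Real.rpow_le_rpow_of_nonpos (div_pos hx hc) hxy (neg_nonpos.mpr ht)
    _ = c ^ t * x ^ (-t) := by
        rw [Real.div_rpow hx.le hc.le, Real.rpow_neg hc.le]; field_simp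

variable {E : Type*} [SeminormedAddCommGroup E]

/-- Peetre's inequality. -/
lemma one_add_norm_rpow_neg_le (u v : E) (ht : 0 ≤ t) :
    (1 + ‖u‖) ^ (-t) ≤ (1 + ‖u - v‖) ^ t * (1 + ‖v‖) ^ (-t) := by
  refine Real.rpow_neg_le_mul_rpow_neg (by positivity) (by positivity) ?_ ht
  nlinarith [norm_le_norm_add_norm_sub u v, norm_nonneg u, norm_nonneg (u - v)]

lemma one_add_norm_rpow_neg_mul_le (u v : E) (ht : 0 ≤ t) :
    (1 + ‖u‖) ^ (-t) * (1 + ‖v‖) ^ (-t) ≤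
      2 ^ t * (1 + ‖u - v‖) ^ (-t) * ((1 + ‖u‖) ^ (-t) + (1 + ‖v‖) ^ (-t)) := by
  wlog huv : ‖u‖ ≤ ‖v‖ generalizing u v
  · have := this v u (le_of_not_ge huv)
    rwa [norm_sub_rev, add_comm ((1 + ‖v‖) ^ (-t)), mul_comm ((1 + ‖v‖) ^ (-t))] at this
  -- the farther of `u`, `v` from the origin is at distance at least `‖u - v‖ / 2`
  have hv : (1 + ‖v‖) ^ (-t) ≤ 2 ^ t * (1 + ‖u - v‖) ^ (-t) :=
    Real.rpow_neg_le_mul_rpow_neg (by positivity) two_pos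
      (by linarith [norm_sub_le u v]) ht
  have hu : 0 ≤ (1 + ‖u‖) ^ (-t) := by positivity
  calc (1 + ‖u‖) ^ (-t) * (1 + ‖v‖) ^ (-t)
      ≤ (1 + ‖u‖) ^ (-t) * (2 ^ t * (1 + ‖u - v‖) ^ (-t)) := by gcongr
    _ ≤ 2 ^ t * (1 + ‖u - v‖) ^ (-t) * ((1 + ‖u‖) ^ (-t) + (1 + ‖v‖) ^ (-t)) := by
      rw [mul_comm]; gcongr; exact le_add_of_nonneg_right (by positivity)

end Weights

lemma ZLattice.summable_one_add_norm_rpow_neg {E : Type*} [NormedAddCommGroup E]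
    [NormedSpace ℝ E] [FiniteDimensional ℝ E] (L : Submodule ℤ E) [DiscreteTopology L] {t : ℝ}
    (ht : finrank ℤ L < t) : Summable fun n : L ↦ (1 + ‖n‖) ^ (-t) := by
  refine (ZLattice.summable_norm_rpow L (-t) (by linarith)).of_norm_bounded_eventually ?_
  filter_upwards [Filter.eventually_cofinite_ne 0] with n hn
  rw [Real.norm_of_nonneg (by positivity)]
  exact Real.rpow_le_rpow_of_nonpos (norm_pos_iff.mpr hn) (by linarith)
    (by linarith [(finrank ℤ L).cast_nonneg (α := ℝ)])

namespace ZSpan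

variable {E ι : Type*} [NormedAddCommGroup E] [NormedSpace ℝ E] [Fintype ι] (b : Basis ι ℝ E)
  (t : ℝ)

-- `∑ i, ‖b i‖` bounds the distance from a point to its floor in the lattice.
noncomputable def decayConst : ℝ :=
  (1 + 2 * ∑ i, ‖b i‖) ^ t * ∑' n : span ℤ (Set.range b), (1 + ‖n‖) ^ (-t)

variable {b t}

lemma one_add_norm_sub_rpow_neg_le_floor (x y : E) (ht : 0 ≤ t) :
    (1 + ‖x - y‖) ^ (-t) ≤
      (1 + 2 * ∑ i, ‖b i‖) ^ t * (1 + ‖floor b x - floor b y‖) ^ (-t) := by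
  have hfract : ‖(x - y) - ((floor b x : E) - floor b y)‖ ≤ 2 * ∑ i, ‖b i‖ := by
    rw [show (x - y) - ((floor b x : E) - floor b y) = fract b x - fract b y by
      simp only [fract_apply]; abel]
    linarith [norm_sub_le (fract b x) (fract b y), norm_fract_le b x, norm_fract_le b y]
  calc (1 + ‖x - y‖) ^ (-t)
      ≤ (1 + ‖(x - y) - ((floor b x : E) - floor b y)‖) ^ t *
          (1 + ‖(floor b x : E) - floor b y‖) ^ (-t) := one_add_norm_rpow_neg_le _ _ ht
    _ ≤ (1 + 2 * ∑ i, ‖b i‖) ^ t * (1 + ‖floor b x - floor b y‖) ^ (-t) := by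
      gcongr ?_ * _
      exact Real.rpow_le_rpow (by positivity) (by linarith) ht

variable [FiniteDimensional ℝ E]

lemma summable_one_add_norm_rpow_neg (ht : Fintype.card ι < t) :
    Summable fun n : span ℤ (Set.range b) ↦ (1 + ‖n‖) ^ (-t) :=
  ZLattice.summable_one_add_norm_rpow_neg _ <| by
    rwa [ZLattice.rank ℝ, finrank_eq_card_basis b]

lemma decayConst_pos (ht : Fintype.card ι < t) : 0 < decayConst b t :=
  mul_pos (by positivity) <|
    (summable_one_add_norm_rpow_neg ht).tsum_pos (fun _ ↦ by positivity) 0 (by simp)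

variable {κ : Type*} {p : κ → E} {R : ℕ}

lemma sum_one_add_norm_sub_rpow_neg_le (ht : Fintype.card ι < t)
    (hfib : ∀ n, {k | floor b (p k) = n}.encard ≤ R) (x : E) (s : Finset κ) :
    ∑ k ∈ s, (1 + ‖x - p k‖) ^ (-t) ≤ decayConst b t * R := by
  classical
  set v : span ℤ (Set.range b) → ℝ := fun n ↦ (1 + ‖floor b x - n‖) ^ (-t)
  have hv : Summable v :=
    (Equiv.subLeft (floor b x)).summable_iff (f := fun n ↦ (1 + ‖n‖) ^ (-t)) |>.mpr
      (summable_one_add_norm_rpow_neg ht)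
  have hcard (n) : #{k ∈ s | floor b (p k) = n} ≤ R := by
    have := (Set.encard_le_encard (s := ↑{k ∈ s | floor b (p k) = n})
      fun k hk ↦ (Finset.mem_filter.mp hk).2).trans (hfib n)
    rwa [Set.encard_coe_eq_coe_finsetCard, Nat.cast_le] at this
  calc ∑ k ∈ s, (1 + ‖x - p k‖) ^ (-t)
      ≤ ∑ k ∈ s, (1 + 2 * ∑ i, ‖b i‖) ^ t * v (floor b (p k)) :=
        Finset.sum_le_sum fun k _ ↦ one_add_norm_sub_rpow_neg_le_floor x (p k) (by linarith)
    _ = (1 + 2 * ∑ i, ‖b i‖) ^ t *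
          ∑ n ∈ s.image (floor b ∘ p), #{k ∈ s | floor b (p k) = n} • v n := by
        rw [← Finset.mul_sum]; exact congrArg (_ * ·) (Finset.sum_comp v (floor b ∘ p))
    _ ≤ (1 + 2 * ∑ i, ‖b i‖) ^ t * ∑ n ∈ s.image (floor b ∘ p), R * v n := by
        gcongr with n
        rw [nsmul_eq_mul]
        gcongr
        exact_mod_cast hcard n
    _ ≤ (1 + 2 * ∑ i, ‖b i‖) ^ t * (R * ∑' n, v n) := by
        rw [← Finset.mul_sum]
        gcongr
        exact hv.sum_le_tsum _ fun _ _ ↦ by positivity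
    _ = decayConst b t * R := by
        have hshift : ∑' n, v n = ∑' n : span ℤ (Set.range b), (1 + ‖n‖) ^ (-t) :=
          (Equiv.subLeft (floor b x)).tsum_eq fun n ↦ (1 + ‖n‖) ^ (-t)
        rw [hshift, decayConst]; ring

lemma summable_one_add_norm_sub_rpow_neg (ht : Fintype.card ι < t)
    (hfib : ∀ n, {k | floor b (p k) = n}.encard ≤ R) (x : E) :
    Summable fun k ↦ (1 + ‖x - p k‖) ^ (-t) :=
  summable_of_sum_le (fun _ ↦ by positivity) (sum_one_add_norm_sub_rpow_neg_le ht hfib x)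

lemma tsum_one_add_norm_sub_rpow_neg_le (ht : Fintype.card ι < t)
    (hfib : ∀ n, {k | floor b (p k) = n}.encard ≤ R) (x : E) :
    ∑' k, (1 + ‖x - p k‖) ^ (-t) ≤ decayConst b t * R :=
  (summable_one_add_norm_sub_rpow_neg ht hfib x).tsum_le_of_sum_le
    (sum_one_add_norm_sub_rpow_neg_le ht hfib x)

end ZSpan

lemma norm_conj_mul_le_of_decay {𝕜 : Type*} [RCLike 𝕜] {E : Type*} [SeminormedAddCommGroup E]
    {C t : ℝ} (ht : 0 ≤ t) {x z k : E} {a c : 𝕜} (ha : ‖a‖ ≤ C * (1 + ‖x - k‖) ^ (-t))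
    (hc : ‖c‖ ≤ C * (1 + ‖z - k‖) ^ (-t)) :
    ‖conj a * c‖ ≤
      2 ^ t * C ^ 2 * (1 + ‖z - x‖) ^ (-t) * ((1 + ‖x - k‖) ^ (-t) + (1 + ‖z - k‖) ^ (-t)) := by
  rw [norm_mul, RCLike.norm_conj]
  calc ‖a‖ * ‖c‖ ≤ (C * (1 + ‖x - k‖) ^ (-t)) * (C * (1 + ‖z - k‖) ^ (-t)) :=
        mul_le_mul ha hc (norm_nonneg _) ((norm_nonneg _).trans ha)
    _ = C ^ 2 * ((1 + ‖z - k‖) ^ (-t) * (1 + ‖x - k‖) ^ (-t)) := by ring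
    _ ≤ C ^ 2 * (2 ^ t * (1 + ‖(z - k) - (x - k)‖) ^ (-t) *
          ((1 + ‖z - k‖) ^ (-t) + (1 + ‖x - k‖) ^ (-t))) := by
        gcongr ?_ * ?_; exact one_add_norm_rpow_neg_mul_le (z - k) (x - k) ht
    _ = _ := by rw [sub_sub_sub_cancel_right]; ring

lemma EuclideanSpace.encard_floor_fiber_le {d : ℕ} {Λ : Set (EuclideanSpace ℝ (Fin d))} {R : ℕ}
    (hΛ : ∀ x : EuclideanSpace ℝ (Fin d),
      (Λ ∩ {y | ∀ i, y i - x i ∈ Set.Icc (0 : ℝ) 1}).encard ≤ R)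
    (n : span ℤ (Set.range (EuclideanSpace.basisFun (Fin d) ℝ).toBasis)) :
    {k : Λ | ZSpan.floor (EuclideanSpace.basisFun (Fin d) ℝ).toBasis k = n}.encard ≤ R := by
  rw [← Subtype.val_injective.encard_image]
  refine (Set.encard_le_encard ?_).trans (hΛ n)
  rintro _ ⟨k, hk, rfl⟩
  refine ⟨k.2, fun i ↦ ?_⟩
  have hn : (n : EuclideanSpace ℝ (Fin d)) i = ⌊(k : EuclideanSpace ℝ (Fin d)) i⌋ := by
    have h := ZSpan.repr_floor_apply (EuclideanSpace.basisFun (Fin d) ℝ).toBasis k i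
    rw [show ZSpan.floor _ _ = n from hk] at h
    simpa using h
  rw [hn]
  exact ⟨Int.fract_nonneg _, (Int.fract_lt_one _).le⟩

/-- Decay of reproducing kernels: if `|f_k(z)|, |g_k(z)| ≤ C(1+|z-k|)^{-(s+α)}` over a
relatively separated set `Λ` with `rel(Λ) ≤ R`, then
`K_{x₀} = ∑_k \overline{g_k}(x₀) f_k` satisfies
`|K_{x₀}(z)| ≤ C'·R·(1+|z-x₀|)^{-(s+α)}` with `C' = C'(C,s,α,d)`. -/
theorem reproducing_kernel_decay (d : ℕ) (s α C : ℝ)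
    (hs : (d : ℝ) < s) (hα : 0 ≤ α) (hC : 0 < C) :
    ∃ C' > (0 : ℝ), ∀ (Λ : Set (EuclideanSpace ℝ (Fin d))) (R : ℕ),
      (∀ x : EuclideanSpace ℝ (Fin d),
        (Λ ∩ {y | ∀ i, y i - x i ∈ Set.Icc (0:ℝ) 1}).encard ≤ R) →
      ∀ f g : Λ → EuclideanSpace ℝ (Fin d) → ℂ,
      (∀ (k : Λ) z, ‖f k z‖ ≤ C * (1 + ‖z - (k : EuclideanSpace ℝ (Fin d))‖) ^ (-(s + α))) →
      (∀ (k : Λ) z, ‖g k z‖ ≤ C * (1 + ‖z - (k : EuclideanSpace ℝ (Fin d))‖) ^ (-(s + α))) →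
      ∀ (x₀ z : EuclideanSpace ℝ (Fin d)),
        ‖∑' k : Λ, conj (g k x₀) * f k z‖ ≤ C' * R * (1 + ‖z - x₀‖) ^ (-(s + α)) := by
  set t := s + α
  set b := (EuclideanSpace.basisFun (Fin d) ℝ).toBasis
  have ht : (Fintype.card (Fin d) : ℝ) < t := by rw [Fintype.card_fin]; linarith
  have hK := ZSpan.decayConst_pos (b := b) ht
  refine ⟨2 ^ t * C ^ 2 * (2 * ZSpan.decayConst b t), by positivity,
    fun Λ R hΛ f g hf hg x₀ z ↦ ?_⟩
  have hfib := EuclideanSpace.encard_floor_fiber_le hΛ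
  have hsum (w) := ZSpan.summable_one_add_norm_sub_rpow_neg (p := Subtype.val) ht hfib w
  have htsum (w) := ZSpan.tsum_one_add_norm_sub_rpow_neg_le (p := Subtype.val) ht hfib w
  calc ‖∑' k : Λ, conj (g k x₀) * f k z‖
      ≤ 2 ^ t * C ^ 2 * (1 + ‖z - x₀‖) ^ (-t) *
          (∑' k : Λ, (1 + ‖x₀ - k‖) ^ (-t) + ∑' k : Λ, (1 + ‖z - k‖) ^ (-t)) :=
        tsum_of_norm_bounded (((hsum x₀).hasSum.add (hsum z).hasSum).mul_left _)
          fun k ↦ norm_conj_mul_le_of_decay (by linarith) (hg k x₀) (hf k z)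
    _ ≤ 2 ^ t * C ^ 2 * (1 + ‖z - x₀‖) ^ (-t) *
          (ZSpan.decayConst b t * R + ZSpan.decayConst b t * R) := by
        gcongr
        exacts [htsum x₀, htsum z]
    _ = _ := by ring
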